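/- Let F_0,…,F_K be Metzler matrices in ℝ^{N×N}, J ⊆ {1,…,N}, P(0) ∈ ℝ^N nonnegative, and durations τ_0,…,τ_K ≥ 0. Define P(T) = (∏_{k=K}^{0} exp(F_k τ_k)) P(0) and the reduced solution P̄_J(T) = (∏_{k=K}^{0} exp([F_k]_J τ_k)) P_J(0). Then P_J(T) ≥ P̄_J(T) entrywise. -/

import Mathlib

/-!
Shift each Metzler matrix by a multiple of the identity to make it entrywise nonnegative; this
rescales both `exp A` and `exp [A]_J` by the same positive scalar. For a nonnegative matrix
every term of the exponential series of `[A]_J` is dominated by the `J`-block of the corresponding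
term for `A`, since the `J`-block of `A ^ n` sums over all paths while `[A]_J ^ n` only sums over
paths staying in `J`. The relation "`B ≥ 0` is dominated by the `J`-block of `A ≥ 0`" is stable
under products and under applying both sides to a nonnegative vector, which gives the result.
-/

open Matrix NormedSpace

theorem List.forall₂_ofFn {α β : Type*} {R : α → β → Prop} {n : ℕ} {f : Fin n → α}
    {g : Fin n → β} (h : ∀ k, R (f k) (g k)) : Forall₂ R (ofFn f) (ofFn g) := by
  rw [ofFn_eq_map, ofFn_eq_map, forall₂_map_left_iff, forall₂_map_right_iff]
  exact forall₂_same.2 fun k _ => h k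

theorem Finset.sum_comp_le_univ_sum_of_injective {ι κ : Type*} [Fintype ι] [Fintype κ]
    {e : κ → ι} (he : Function.Injective e) {f : ι → ℝ} (hf : ∀ i, 0 ≤ f i) :
    ∑ k, f (e k) ≤ ∑ i, f i :=
  (Finset.sum_map Finset.univ ⟨e, he⟩ f).symm.le.trans (Finset.sum_le_univ_sum_of_nonneg hf)

namespace Matrix

section Exp

variable {ι : Type*} [Fintype ι] [DecidableEq ι]

attribute [local instance] Matrix.linftyOpNormedRing Matrix.linftyOpNormedAlgebra

theorem hasSum_exp_apply (A : Matrix ι ι ℝ) (i j : ι) :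
    HasSum (fun n : ℕ => (n.factorial : ℝ)⁻¹ * (A ^ n) i j) (exp A i j) := by
  rw [exp_eq_tsum ℝ]
  exact Pi.hasSum.1 (Pi.hasSum.1 (expSeries_summable' (𝕂 := ℝ) A).hasSum i) j

theorem exp_add_smul_one (A : Matrix ι ι ℝ) (c : ℝ) :
    exp (A + c • 1) = Real.exp c • exp A := by
  have hc : (exp fun _ : ι => c) = fun _ => Real.exp c := by
    rw [Pi.exp_def, Real.exp_eq_exp_ℝ]
  rw [exp_add_of_commute A _ ((Commute.one_right A).smul_right c), smul_one_eq_diagonal,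
    exp_diagonal, hc, ← smul_one_eq_diagonal, Matrix.mul_smul, mul_one]

theorem exists_add_smul_one_nonneg_of_metzler {A : Matrix ι ι ℝ}
    (hA : ∀ i j, i ≠ j → 0 ≤ A i j) : ∃ c : ℝ, ∀ i j, 0 ≤ (A + c • 1) i j := by
  refine ⟨∑ k, |A k k|, fun i j => ?_⟩
  rcases eq_or_ne i j with rfl | hij
  · have hdiag : |A i i| ≤ ∑ k, |A k k| :=
      Finset.single_le_sum (fun k _ => abs_nonneg (A k k)) (Finset.mem_univ i)
    simp only [add_apply, smul_apply, one_apply_eq, smul_eq_mul, mul_one]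
    linarith [neg_abs_le (A i i)]
  · simpa [one_apply_ne hij] using hA i j hij

end Exp

structure NonnegMinorant {ι κ : Type*} (e : κ → ι) (B : Matrix κ κ ℝ) (A : Matrix ι ι ℝ) :
    Prop where
  nonneg_left : ∀ i j, 0 ≤ B i j
  nonneg_right : ∀ i j, 0 ≤ A i j
  le : ∀ i j, B i j ≤ A (e i) (e j)

namespace NonnegMinorant

variable {ι κ : Type*} {e : κ → ι} {A A₁ A₂ : Matrix ι ι ℝ} {B B₁ B₂ : Matrix κ κ ℝ}

theorem submatrix (hA : ∀ i j, 0 ≤ A i j) : NonnegMinorant e (A.submatrix e e) A :=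
  ⟨fun i j => hA (e i) (e j), hA, fun _ _ => le_rfl⟩

theorem smul (h : NonnegMinorant e B A) {c : ℝ} (hc : 0 ≤ c) :
    NonnegMinorant e (c • B) (c • A) where
  nonneg_left i j := mul_nonneg hc (h.nonneg_left i j)
  nonneg_right i j := mul_nonneg hc (h.nonneg_right i j)
  le i j := mul_le_mul_of_nonneg_left (h.le i j) hc

theorem one [DecidableEq ι] [DecidableEq κ] (he : Function.Injective e) :
    NonnegMinorant e (1 : Matrix κ κ ℝ) 1 := by
  simpa only [submatrix_one e he] using
    submatrix (e := e) (A := 1) fun i j => by rw [one_apply]; split_ifs <;> norm_num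

variable [Fintype ι] [Fintype κ]

theorem mul (he : Function.Injective e) (h₁ : NonnegMinorant e B₁ A₁)
    (h₂ : NonnegMinorant e B₂ A₂) : NonnegMinorant e (B₁ * B₂) (A₁ * A₂) where
  nonneg_left i j :=
    Finset.sum_nonneg fun k _ => mul_nonneg (h₁.nonneg_left i k) (h₂.nonneg_left k j)
  nonneg_right i j :=
    Finset.sum_nonneg fun k _ => mul_nonneg (h₁.nonneg_right i k) (h₂.nonneg_right k j)
  le i j := calc
    (B₁ * B₂) i j ≤ ∑ k, A₁ (e i) (e k) * A₂ (e k) (e j) :=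
      Finset.sum_le_sum fun k _ =>
        mul_le_mul (h₁.le i k) (h₂.le k j) (h₂.nonneg_left k j) (h₁.nonneg_right _ _)
    _ ≤ (A₁ * A₂) (e i) (e j) :=
      Finset.sum_comp_le_univ_sum_of_injective he fun l =>
        mul_nonneg (h₁.nonneg_right _ l) (h₂.nonneg_right l _)

theorem mulVec_le (he : Function.Injective e) (h : NonnegMinorant e B A) {v : ι → ℝ}
    (hv : 0 ≤ v) : B *ᵥ (v ∘ e) ≤ (A *ᵥ v) ∘ e := fun i => calc
  (B *ᵥ (v ∘ e)) i ≤ ∑ k, A (e i) (e k) * v (e k) :=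
    Finset.sum_le_sum fun k _ => mul_le_mul_of_nonneg_right (h.le i k) (hv _)
  _ ≤ (A *ᵥ v) (e i) :=
    Finset.sum_comp_le_univ_sum_of_injective he fun l => mul_nonneg (h.nonneg_right _ l) (hv l)

variable [DecidableEq ι] [DecidableEq κ]

theorem pow (he : Function.Injective e) (h : NonnegMinorant e B A) (n : ℕ) :
    NonnegMinorant e (B ^ n) (A ^ n) := by
  induction n with
  | zero => exact one he
  | succ n ih => exact ih.mul he h

theorem list_prod (he : Function.Injective e) {Bs : List (Matrix κ κ ℝ)}
    {As : List (Matrix ι ι ℝ)} (h : List.Forall₂ (NonnegMinorant e) Bs As) :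
    NonnegMinorant e Bs.prod As.prod := by
  induction h with
  | nil => exact one he
  | cons hBA _ ih => exact hBA.mul he ih

theorem exp (he : Function.Injective e) (h : NonnegMinorant e B A) :
    NonnegMinorant e (exp B) (exp A) where
  nonneg_left i j := (hasSum_exp_apply B i j).nonneg fun n =>
    mul_nonneg (by positivity) ((h.pow he n).nonneg_left i j)
  nonneg_right i j := (hasSum_exp_apply A i j).nonneg fun n =>
    mul_nonneg (by positivity) ((h.pow he n).nonneg_right i j)
  le i j := hasSum_le (fun n => mul_le_mul_of_nonneg_left ((h.pow he n).le i j) (by positivity))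
    (hasSum_exp_apply B i j) (hasSum_exp_apply A (e i) (e j))

theorem exp_submatrix_of_metzler (he : Function.Injective e) (hA : ∀ i j, i ≠ j → 0 ≤ A i j) :
    NonnegMinorant e (NormedSpace.exp (A.submatrix e e)) (NormedSpace.exp A) := by
  obtain ⟨c, hc⟩ := exists_add_smul_one_nonneg_of_metzler hA
  have hsub :
      (A + c • 1).submatrix e e = A.submatrix e e + c • (1 : Matrix ι ι ℝ).submatrix e e := rfl
  have hshift := ((submatrix (e := e) hc).exp he).smul (Real.exp_nonneg (-c))
  rw [hsub, submatrix_one e he, exp_add_smul_one, exp_add_smul_one] at hshift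
  simpa only [smul_smul, ← Real.exp_add, neg_add_cancel, Real.exp_zero, one_smul] using hshift

end NonnegMinorant

end Matrix

/-- for Metzler matrices `F₀,…,F_K`, an index set `J`, a nonnegative
initial vector `P₀` and durations `τ₀,…,τ_K ≥ 0`, the full solution
`P(T) = exp(F_K τ_K) ⋯ exp(F₀ τ₀) P₀` dominates, entrywise on `J`, the reduced
solution `P̄_J(T) = exp([F_K]_J τ_K) ⋯ exp([F₀]_J τ₀) P₀|_J`. -/
theorem stmt12 {N K : ℕ} (F : Fin (K + 1) → Matrix (Fin N) (Fin N) ℝ)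
    (hMetzler : ∀ k, ∀ i j, i ≠ j → 0 ≤ F k i j)
    (J : Finset (Fin N)) (P0 : Fin N → ℝ) (hP0 : ∀ i, 0 ≤ P0 i)
    (τ : Fin (K + 1) → ℝ) (hτ : ∀ k, 0 ≤ τ k) :
    let PT : Fin N → ℝ :=
      ((List.ofFn fun k => exp (τ k • F k)).reverse.prod).mulVec P0
    let PbarT : {j // j ∈ J} → ℝ :=
      ((List.ofFn fun k =>
          exp (τ k • ((F k).submatrix Subtype.val Subtype.val :
            Matrix {j // j ∈ J} {j // j ∈ J} ℝ))).reverse.prod).mulVec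
        (fun j => P0 j.val)
    ∀ j : {j // j ∈ J}, PbarT j ≤ PT j.val := by
  intro PT PbarT j
  have hstep (k : Fin (K + 1)) : NonnegMinorant Subtype.val
      (exp (τ k • ((F k).submatrix Subtype.val Subtype.val :
        Matrix {j // j ∈ J} {j // j ∈ J} ℝ))) (exp (τ k • F k)) :=
    .exp_submatrix_of_metzler (A := τ k • F k) Subtype.val_injective fun a b hab =>
      mul_nonneg (hτ k) (hMetzler k a b hab)
  have hprod := NonnegMinorant.list_prod Subtype.val_injective
    (List.forall₂_reverse_iff.2 (List.forall₂_ofFn hstep))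
  exact hprod.mulVec_le Subtype.val_injective hP0 j
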